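/- If for almost every p ∈ ℝⁿ (with the parabolic metric d) the quantity β_∞(2Q) → 0 as dyadic parabolic boxes Q containing p shrink to p, and if for almost every p = (x,t) there is a linear map A_p : ℝ^{n−1} → ℝ with |ψ(y,t) − ψ(p) − A_p(y − x)| = o(|y − x|), then for almost every p: |ψ(q) − ψ(p) − A_p(y − x)| = o(d(p,q)) as q = (y,s) → p, i.e., ψ is parabolically differentiable at p with horizontal derivative A_p. -/

import Mathlib

open MeasureTheory
open scoped NNReal

/-- The parabolic distance on `ℝ^{n-1} × ℝ`. -/
noncomputable def pdist {d : ℕ} (p q : EuclideanSpace ℝ (Fin d) × ℝ) : ℝ :=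
  dist p.1 q.1 + Real.sqrt |p.2 - q.2|

/-- Diameter of a set in the parabolic metric. -/
noncomputable def pdiam {d : ℕ} (S : Set (EuclideanSpace ℝ (Fin d) × ℝ)) : ℝ :=
  sSup ((fun pq : (EuclideanSpace ℝ (Fin d) × ℝ) × (EuclideanSpace ℝ (Fin d) × ℝ) =>
    pdist pq.1 pq.2) '' (S ×ˢ S))

/-- The dyadic parabolic box of generation `j`. -/
def pdyBox (d : ℕ) (j : ℤ) (k : Fin d → ℤ) (m : ℤ) :
    Set (EuclideanSpace ℝ (Fin d) × ℝ) :=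
  {p | (∀ i, (k i : ℝ) * (2 : ℝ) ^ (-j) ≤ p.1 i ∧ p.1 i < ((k i : ℝ) + 1) * (2 : ℝ) ^ (-j)) ∧
    ((m : ℝ) * (2 : ℝ) ^ (-(2 * j)) ≤ p.2 ∧ p.2 < ((m : ℝ) + 1) * (2 : ℝ) ^ (-(2 * j)))}

/-- The concentric dilate `cQ` of the dyadic parabolic box. -/
def pdyDil (d : ℕ) (c : ℝ) (j : ℤ) (k : Fin d → ℤ) (m : ℤ) :
    Set (EuclideanSpace ℝ (Fin d) × ℝ) :=
  {p | (∀ i, |p.1 i - ((k i : ℝ) + 1 / 2) * (2 : ℝ) ^ (-j)| ≤ c * (2 : ℝ) ^ (-j) / 2) ∧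
    |p.2 - ((m : ℝ) + 1 / 2) * (2 : ℝ) ^ (-(2 * j))| ≤ c * (2 : ℝ) ^ (-(2 * j)) / 2}

/-- The parabolic `L^∞` beta number: infimum over affine maps `A : ℝ^{n-1} → ℝ` of
`sup_{(y,s) ∈ Q} |ψ(y,s) − A(y)| / diam Q` (diameter in the parabolic metric). -/
noncomputable def betaInfP (d : ℕ) (ψ : EuclideanSpace ℝ (Fin d) × ℝ → ℝ)
    (Q : Set (EuclideanSpace ℝ (Fin d) × ℝ)) : ℝ :=
  sInf {r : ℝ | ∃ A : EuclideanSpace ℝ (Fin d) →ᵃ[ℝ] ℝ,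
    r = ⨆ p ∈ Q, |ψ p - A p.1| / pdiam Q}


/-!
Write `q = (y, s)` and `p = (x, t)`, and split `ψ q - ψ p - A (y - x)` into the horizontal
increment `ψ (y, t) - ψ p - A (y - x)`, which is `o(|y - x|)` by assumption, and the vertical
increment `ψ (y, s) - ψ (y, t)`. Take a dyadic box `Q ∋ p` of side comparable to `d(p, q)`:
both `(y, s)` and `(y, t)` lie in `2Q`, and an affine function of the spatial variable alone
that approximates `ψ` on `2Q` up to `β_∞(2Q) diam(2Q)` takes the same value at them, so the
vertical increment is at most `2 β_∞(2Q) diam(2Q) = o(d(p, q))`.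
-/

namespace Parabolic

variable {d : ℕ}

local notation "P" d:max => EuclideanSpace ℝ (Fin d) × ℝ

lemma norm_le_sqrt_mul_of_forall_abs_le {a : ℝ} (ha : 0 ≤ a) (w : EuclideanSpace ℝ (Fin d))
    (h : ∀ i, |w i| ≤ a) : ‖w‖ ≤ √d * a := by
  rw [EuclideanSpace.norm_eq]
  calc √(∑ i, ‖w i‖ ^ 2) ≤ √(∑ _i : Fin d, a ^ 2) := by
        gcongr with i; exact h i
    _ = √d * a := by simp [Real.sqrt_mul, Real.sqrt_sq ha]

lemma pdist_nonneg (p q : P d) : 0 ≤ pdist p q :=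
  add_nonneg dist_nonneg (Real.sqrt_nonneg _)

lemma pdist_comm (p q : P d) : pdist p q = pdist q p := by
  simp only [pdist, dist_comm, abs_sub_comm]

lemma dist_fst_le_pdist (p q : P d) : dist p.1 q.1 ≤ pdist p q :=
  le_add_of_nonneg_right (Real.sqrt_nonneg _)

lemma abs_fst_sub_apply_le_pdist (p q : P d) (i : Fin d) : |p.1 i - q.1 i| ≤ pdist p q :=
  calc |p.1 i - q.1 i| = ‖(p.1 - q.1) i‖ := rfl
    _ ≤ ‖p.1 - q.1‖ := PiLp.norm_apply_le _ i
    _ ≤ pdist p q := (dist_eq_norm p.1 q.1).symm ▸ dist_fst_le_pdist p q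

lemma abs_snd_sub_le_pdist_sq (p q : P d) : |p.2 - q.2| ≤ pdist p q ^ 2 := by
  rw [← Real.sq_sqrt (abs_nonneg (p.2 - q.2))]
  gcongr
  exact le_add_of_nonneg_left dist_nonneg

lemma eq_of_pdist_eq_zero {p q : P d} (h : pdist p q = 0) : p = q := by
  have h1 : dist p.1 q.1 = 0 := le_antisymm (h ▸ dist_fst_le_pdist p q) dist_nonneg
  have h2 : |p.2 - q.2| = 0 := le_antisymm (by simpa [h] using abs_snd_sub_le_pdist_sq p q)
    (abs_nonneg _)
  exact Prod.ext (dist_eq_zero.mp h1) (sub_eq_zero.mp (abs_eq_zero.mp h2))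

lemma pdist_le_of_abs_sub_le {p q : P d} {a b : ℝ} (ha : 0 ≤ a) (hb : 0 ≤ b)
    (h1 : ∀ i, |p.1 i - q.1 i| ≤ a) (h2 : |p.2 - q.2| ≤ b ^ 2) : pdist p q ≤ √d * a + b := by
  have hx : dist p.1 q.1 ≤ √d * a := by
    rw [dist_eq_norm]; exact norm_le_sqrt_mul_of_forall_abs_le ha _ h1
  have ht : √|p.2 - q.2| ≤ b := Real.sqrt_le_iff.mpr ⟨hb, h2⟩
  exact add_le_add hx ht

lemma pdiam_le {S : Set (P d)} {M : ℝ} (hM : 0 ≤ M) (h : ∀ a ∈ S, ∀ b ∈ S, pdist a b ≤ M) :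
    pdiam S ≤ M := by
  refine Real.sSup_le ?_ hM
  rintro x ⟨⟨a, b⟩, hab, rfl⟩
  exact h a hab.1 b hab.2

lemma pdist_le_pdiam {S : Set (P d)} {M : ℝ} (h : ∀ a ∈ S, ∀ b ∈ S, pdist a b ≤ M)
    {a b : P d} (ha : a ∈ S) (hb : b ∈ S) : pdist a b ≤ pdiam S := by
  refine le_csSup ⟨M, ?_⟩ ⟨(a, b), ⟨ha, hb⟩, rfl⟩
  rintro x ⟨⟨u, v⟩, huv, rfl⟩
  exact h u huv.1 v huv.2


lemma two_zpow_neg_two_mul (j : ℤ) : (2 : ℝ) ^ (-(2 * j)) = ((2 : ℝ) ^ (-j)) ^ 2 := by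
  rw [← zpow_natCast, ← zpow_mul]; ring_nf

lemma exists_mem_pdyBox (p : P d) (j : ℤ) : ∃ k m, p ∈ pdyBox d j k m := by
  have floor_mul {r : ℝ} (hr : 0 < r) (x : ℝ) : ⌊x / r⌋ * r ≤ x ∧ x < (⌊x / r⌋ + 1) * r :=
    ⟨(le_div_iff₀ hr).mp (Int.floor_le _), (div_lt_iff₀ hr).mp (Int.lt_floor_add_one _)⟩
  exact ⟨fun i => ⌊p.1 i / 2 ^ (-j)⌋, ⌊p.2 / 2 ^ (-(2 * j))⌋,
    fun i => floor_mul (by positivity) _, floor_mul (by positivity) _⟩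

variable {j : ℤ} {k : Fin d → ℤ} {m : ℤ}

lemma pdyBox_subset_pdyDil_one : pdyBox d j k m ⊆ pdyDil d 1 j k m := by
  rintro p ⟨hx, ht⟩
  refine ⟨fun i => abs_le.mpr ⟨?_, ?_⟩, abs_le.mpr ⟨?_, ?_⟩⟩
  all_goals first | linarith [(hx i).1, (hx i).2] | linarith [ht.1, ht.2]

lemma mem_pdyDil_add {c e : ℝ} {p q : P d} (hp : p ∈ pdyDil d c j k m)
    (hx : ∀ i, |q.1 i - p.1 i| ≤ e * 2 ^ (-j) / 2)
    (ht : |q.2 - p.2| ≤ e * 2 ^ (-(2 * j)) / 2) : q ∈ pdyDil d (c + e) j k m := by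
  refine ⟨fun i => ?_, ?_⟩
  · calc _ ≤ |q.1 i - p.1 i| + |p.1 i - (k i + 1 / 2) * 2 ^ (-j)| := abs_sub_le _ _ _
      _ ≤ _ := by linarith [hx i, hp.1 i]
  · calc _ ≤ |q.2 - p.2| + |p.2 - (m + 1 / 2) * 2 ^ (-(2 * j))| := abs_sub_le _ _ _
      _ ≤ _ := by linarith [hp.2]

lemma mem_pdyDil_two_of_mem_pdyBox {p q : P d} (hp : p ∈ pdyBox d j k m)
    (hx : ∀ i, |q.1 i - p.1 i| ≤ 2 ^ (-j) / 2) (ht : |q.2 - p.2| ≤ 2 ^ (-(2 * j)) / 2) :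
    q ∈ pdyDil d 2 j k m := by
  rw [← one_add_one_eq_two]
  exact mem_pdyDil_add (pdyBox_subset_pdyDil_one hp) (by simpa using hx) (by simpa using ht)

lemma pdist_le_of_mem_pdyDil {c : ℝ} (hc : 0 ≤ c) {a b : P d} (ha : a ∈ pdyDil d c j k m)
    (hb : b ∈ pdyDil d c j k m) : pdist a b ≤ (√d * c + √c) * 2 ^ (-j) := by
  have hx : ∀ i, |a.1 i - b.1 i| ≤ c * 2 ^ (-j) := fun i => by
    have h1 := abs_le.mp (ha.1 i)
    have h2 := abs_le.mp (hb.1 i)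
    exact abs_le.mpr ⟨by linarith, by linarith⟩
  have ht : |a.2 - b.2| ≤ (√c * 2 ^ (-j)) ^ 2 := by
    have h1 := abs_le.mp ha.2
    have h2 := abs_le.mp hb.2
    rw [mul_pow, Real.sq_sqrt hc, ← two_zpow_neg_two_mul]
    exact abs_le.mpr ⟨by linarith, by linarith⟩
  calc pdist a b ≤ √d * (c * 2 ^ (-j)) + √c * 2 ^ (-j) :=
        pdist_le_of_abs_sub_le (by positivity) (by positivity) hx ht
    _ = _ := by ring

lemma pdiam_pdyBox_le : pdiam (pdyBox d j k m) ≤ (√d + 1) * 2 ^ (-j) := by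
  refine pdiam_le (by positivity) fun a ha b hb => ?_
  simpa using pdist_le_of_mem_pdyDil zero_le_one (pdyBox_subset_pdyDil_one ha)
    (pdyBox_subset_pdyDil_one hb)

lemma zpow_neg_le_pdiam_pdyDil_two {p : P d} (hp : p ∈ pdyBox d j k m) :
    (2 : ℝ) ^ (-j) ≤ pdiam (pdyDil d 2 j k m) := by
  set r : ℝ := 2 ^ (-j)
  have hr : 0 < r := by positivity
  have mem (s : ℝ) (hs : |s| = r ^ 2 / 2) : (p.1, p.2 + s) ∈ pdyDil d 2 j k m :=
    mem_pdyDil_two_of_mem_pdyBox hp (fun i => by simp only [sub_self, abs_zero]; positivity)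
      (by rw [two_zpow_neg_two_mul, add_sub_cancel_left, hs])
  have hpdist : pdist (p.1, p.2 + r ^ 2 / 2) (p.1, p.2 + -(r ^ 2 / 2)) = r := by
    simp [pdist, show p.2 + r ^ 2 / 2 - (p.2 + -(r ^ 2 / 2)) = r ^ 2 by ring,
      Real.sqrt_sq hr.le]
  rw [← hpdist]
  exact pdist_le_pdiam (fun a ha b hb => pdist_le_of_mem_pdyDil zero_le_two ha hb)
    (mem _ (abs_of_pos (by positivity))) (mem _ (by rw [abs_neg, abs_of_pos (by positivity)]))


lemma abs_affineMap_sub_le (A : EuclideanSpace ℝ (Fin d) →ᵃ[ℝ] ℝ)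
    (u v : EuclideanSpace ℝ (Fin d)) :
    |A u - A v| ≤ ‖LinearMap.toContinuousLinearMap A.linear‖ * ‖u - v‖ := by
  rw [← vsub_eq_sub (A u), ← AffineMap.linearMap_vsub, vsub_eq_sub, ← Real.norm_eq_abs]
  exact (LinearMap.toContinuousLinearMap A.linear).le_opNorm _

lemma bddAbove_abs_sub_affineMap {L : ℝ≥0} {ψ : P d → ℝ}
    (hψ : ∀ p q, |ψ p - ψ q| ≤ L * pdist p q) {Q : Set (P d)} {q₀ : P d} {R : ℝ}
    (hR : ∀ q ∈ Q, pdist q q₀ ≤ R) (A : EuclideanSpace ℝ (Fin d) →ᵃ[ℝ] ℝ) :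
    BddAbove ((fun p => |ψ p - A p.1|) '' Q) := by
  set K := ‖LinearMap.toContinuousLinearMap A.linear‖
  refine ⟨L * R + |ψ q₀ - A q₀.1| + K * R, ?_⟩
  rintro _ ⟨p, hp, rfl⟩
  have hψp : |ψ p - ψ q₀| ≤ L * R :=
    (hψ p q₀).trans (mul_le_mul_of_nonneg_left (hR p hp) L.coe_nonneg)
  have hAp : |A q₀.1 - A p.1| ≤ K * R := by
    refine (abs_affineMap_sub_le A _ _).trans (mul_le_mul_of_nonneg_left ?_ (norm_nonneg _))
    rw [norm_sub_rev, ← dist_eq_norm]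
    exact (dist_fst_le_pdist p q₀).trans (hR p hp)
  calc |ψ p - A p.1| = |(ψ p - ψ q₀) + (ψ q₀ - A q₀.1) + (A q₀.1 - A p.1)| := by ring_nf
    _ ≤ |ψ p - ψ q₀| + |ψ q₀ - A q₀.1| + |A q₀.1 - A p.1| := abs_add_three _ _ _
    _ ≤ _ := by gcongr

-- `hbdd` is needed because `⨆` of a family of reals that is not bounded above is `0`.
lemma exists_affineMap_abs_sub_le_of_betaInfP_lt {ψ : P d → ℝ} {Q : Set (P d)}
    (hQ : 0 < pdiam Q)
    (hbdd : ∀ A : EuclideanSpace ℝ (Fin d) →ᵃ[ℝ] ℝ, BddAbove ((fun p => |ψ p - A p.1|) '' Q))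
    {ε : ℝ} (hβ : betaInfP d ψ Q < ε) :
    ∃ A : EuclideanSpace ℝ (Fin d) →ᵃ[ℝ] ℝ, ∀ q ∈ Q, |ψ q - A q.1| ≤ ε * pdiam Q := by
  have hbelow : BddBelow {r : ℝ | ∃ A : EuclideanSpace ℝ (Fin d) →ᵃ[ℝ] ℝ,
      r = ⨆ p ∈ Q, |ψ p - A p.1| / pdiam Q} := by
    refine ⟨0, ?_⟩
    rintro r ⟨A, rfl⟩
    exact Real.iSup_nonneg fun p => Real.iSup_nonneg fun _ => by positivity
  obtain ⟨_, ⟨A, rfl⟩, hA⟩ :=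
    (csInf_lt_iff hbelow ⟨_, AffineMap.const ℝ _ (0 : ℝ), rfl⟩).mp hβ
  refine ⟨A, fun q hq => ?_⟩
  obtain ⟨B, hB⟩ := hbdd A
  have hB0 : 0 ≤ B := (abs_nonneg _).trans (hB ⟨q, hq, rfl⟩)
  have hsup : BddAbove (Set.range fun p => ⨆ _ : p ∈ Q, |ψ p - A p.1| / pdiam Q) := by
    refine ⟨B / pdiam Q, ?_⟩
    rintro _ ⟨p, rfl⟩
    exact Real.iSup_le (fun hp => by gcongr; exact hB ⟨p, hp, rfl⟩) (by positivity)
  have hle : |ψ q - A q.1| / pdiam Q < ε :=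
    (le_ciSup_of_le hsup q (ciSup_pos hq).ge).trans_lt hA
  exact ((div_lt_iff₀ hQ).mp hle).le


lemma abs_sub_le_of_betaInfP_pdyDil_two_lt {L : ℝ≥0} {ψ : P d → ℝ}
    (hψ : ∀ p q, |ψ p - ψ q| ≤ L * pdist p q) {p q : P d} (hp : p ∈ pdyBox d j k m)
    (hpq : 2 * pdist p q ≤ 2 ^ (-j)) {η : ℝ} (hη : 0 ≤ η)
    (hβ : betaInfP d ψ (pdyDil d 2 j k m) < η) :
    |ψ q - ψ (q.1, p.2)| ≤ 2 * η * ((√d * 2 + √2) * 2 ^ (-j)) := by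
  set Q := pdyDil d 2 j k m
  have hdiam : ∀ a ∈ Q, ∀ b ∈ Q, pdist a b ≤ (√d * 2 + √2) * 2 ^ (-j) :=
    fun a ha b hb => pdist_le_of_mem_pdyDil zero_le_two ha hb
  have hpQ : p ∈ Q := mem_pdyDil_two_of_mem_pdyBox hp
    (fun i => by simp only [sub_self, abs_zero]; positivity)
    (by simp only [sub_self, abs_zero]; positivity)
  have hx : ∀ i, |q.1 i - p.1 i| ≤ 2 ^ (-j) / 2 := fun i => by
    linarith [abs_fst_sub_apply_le_pdist q p i, pdist_comm p q]
  have hqQ : q ∈ Q := by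
    refine mem_pdyDil_two_of_mem_pdyBox hp hx ?_
    have : 0 ≤ pdist p q := pdist_nonneg p q
    rw [two_zpow_neg_two_mul, abs_sub_comm]
    nlinarith [abs_snd_sub_le_pdist_sq p q]
  have hqpQ : (q.1, p.2) ∈ Q :=
    mem_pdyDil_two_of_mem_pdyBox hp hx (by simp only [sub_self, abs_zero]; positivity)
  obtain ⟨A, hA⟩ := exists_affineMap_abs_sub_le_of_betaInfP_lt
    ((zpow_pos two_pos _).trans_le (zpow_neg_le_pdiam_pdyDil_two hp))
    (bddAbove_abs_sub_affineMap hψ fun q hq => hdiam q hq p hpQ) hβ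
  have hQ : pdiam Q ≤ (√d * 2 + √2) * 2 ^ (-j) := pdiam_le (by positivity) hdiam
  calc |ψ q - ψ (q.1, p.2)| ≤ |ψ q - A q.1| + |ψ (q.1, p.2) - A q.1| :=
        (abs_sub_le _ (A q.1) _).trans_eq (by rw [abs_sub_comm (A q.1)])
    _ ≤ η * pdiam Q + η * pdiam Q := add_le_add (hA q hqQ) (hA _ hqpQ)
    _ ≤ _ := by nlinarith


def BetaTendstoZeroAt (ψ : P d → ℝ) (p : P d) : Prop :=
  ∀ ε > (0 : ℝ), ∃ δ > (0 : ℝ), ∀ (j : ℤ) (k : Fin d → ℤ) (m : ℤ),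
    p ∈ pdyBox d j k m → pdiam (pdyBox d j k m) < δ → betaInfP d ψ (pdyDil d 2 j k m) < ε

def HasHorizontalDerivAt (ψ : P d → ℝ) (A : EuclideanSpace ℝ (Fin d) →ₗ[ℝ] ℝ) (p : P d) :
    Prop :=
  ∀ ε > (0 : ℝ), ∃ δ > (0 : ℝ), ∀ y : EuclideanSpace ℝ (Fin d),
    ‖y - p.1‖ < δ → |ψ (y, p.2) - ψ p - A (y - p.1)| ≤ ε * ‖y - p.1‖

def HasParabolicDerivAt (ψ : P d → ℝ) (A : EuclideanSpace ℝ (Fin d) →ₗ[ℝ] ℝ) (p : P d) :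
    Prop :=
  ∀ ε > (0 : ℝ), ∃ δ > (0 : ℝ), ∀ q : P d,
    pdist p q < δ → |ψ q - ψ p - A (q.1 - p.1)| ≤ ε * pdist p q

lemma exists_two_mul_lt_zpow_neg_le {D : ℝ} (hD : 0 < D) :
    ∃ j : ℤ, 2 * D < (2 : ℝ) ^ (-j) ∧ (2 : ℝ) ^ (-j) ≤ 4 * D := by
  obtain ⟨n, hle, hlt⟩ := exists_mem_Ico_zpow (by positivity : 0 < 4 * D) one_lt_two
  refine ⟨-n, ?_, by rwa [neg_neg]⟩
  rw [neg_neg]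
  rw [zpow_add_one₀ two_ne_zero] at hlt
  linarith

theorem HasHorizontalDerivAt.hasParabolicDerivAt {ψ : P d → ℝ}
    {A : EuclideanSpace ℝ (Fin d) →ₗ[ℝ] ℝ} {p : P d} (hA : HasHorizontalDerivAt ψ A p)
    {L : ℝ≥0} (hψ : ∀ p q, |ψ p - ψ q| ≤ L * pdist p q) (hβ : BetaTendstoZeroAt ψ p) :
    HasParabolicDerivAt ψ A p := by
  intro ε hε
  set C : ℝ := √d * 2 + √2
  have hC : 0 < C := by positivity
  obtain ⟨δ₁, hδ₁, hsmall⟩ := hβ (ε / (16 * C)) (by positivity)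
  obtain ⟨δ₂, hδ₂, hhor⟩ := hA (ε / 2) (by positivity)
  refine ⟨min (δ₁ / (4 * (√d + 1))) δ₂, by positivity, fun q hq => ?_⟩
  set D := pdist p q
  rcases (pdist_nonneg p q).eq_or_lt with hD | hD
  · obtain rfl := eq_of_pdist_eq_zero hD.symm
    simpa using mul_nonneg hε.le (pdist_nonneg p p)
  obtain ⟨j, hj₁, hj₂⟩ := exists_two_mul_lt_zpow_neg_le hD
  obtain ⟨k, m, hp⟩ := exists_mem_pdyBox p j
  have hbox : pdiam (pdyBox d j k m) < δ₁ :=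
    calc pdiam (pdyBox d j k m) ≤ (√d + 1) * 2 ^ (-j) := pdiam_pdyBox_le
      _ ≤ (√d + 1) * (4 * D) := by gcongr
      _ < δ₁ := by
        have := (lt_min_iff.mp hq).1
        rw [lt_div_iff₀ (by positivity)] at this
        linarith
  have htime := abs_sub_le_of_betaInfP_pdyDil_two_lt hψ hp hj₁.le (by positivity)
    (hsmall j k m hp hbox)
  have hx : ‖q.1 - p.1‖ ≤ D := by
    rw [← dist_eq_norm, dist_comm]; exact dist_fst_le_pdist p q
  have hspace := hhor q.1 (hx.trans_lt (lt_min_iff.mp hq).2)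
  calc |ψ q - ψ p - A (q.1 - p.1)|
      = |(ψ q - ψ (q.1, p.2)) + (ψ (q.1, p.2) - ψ p - A (q.1 - p.1))| := by ring_nf
    _ ≤ |ψ q - ψ (q.1, p.2)| + |ψ (q.1, p.2) - ψ p - A (q.1 - p.1)| := abs_add_le _ _
    _ ≤ 2 * (ε / (16 * C)) * (C * 2 ^ (-j)) + ε / 2 * ‖q.1 - p.1‖ := add_le_add htime hspace
    _ = ε / 8 * 2 ^ (-j) + ε / 2 * ‖q.1 - p.1‖ := by field_simp; ring
    _ ≤ ε / 8 * (4 * D) + ε / 2 * D := by gcongr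
    _ = ε * D := by ring

end Parabolic

/-- Parabolic Rademacher upgrade: if a.e. `β_∞(2Q) → 0` along shrinking dyadic parabolic
boxes containing `p`, and a.e. `ψ` is horizontally differentiable, then a.e. the
horizontal derivative gives full parabolic differentiability. -/
theorem stmt17 (d : ℕ) (L : ℝ≥0) (ψ : EuclideanSpace ℝ (Fin d) × ℝ → ℝ)
    (hψ : ∀ p q, |ψ p - ψ q| ≤ (L : ℝ) * pdist p q)
    (h1 : ∀ᵐ p : EuclideanSpace ℝ (Fin d) × ℝ ∂volume,
      ∀ ε > (0 : ℝ), ∃ δ > (0 : ℝ), ∀ (j : ℤ) (k : Fin d → ℤ) (m : ℤ),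
        p ∈ pdyBox d j k m → pdiam (pdyBox d j k m) < δ →
          betaInfP d ψ (pdyDil d 2 j k m) < ε)
    (h2 : ∀ᵐ p : EuclideanSpace ℝ (Fin d) × ℝ ∂volume,
      ∃ A : EuclideanSpace ℝ (Fin d) →ₗ[ℝ] ℝ,
        ∀ ε > (0 : ℝ), ∃ δ > (0 : ℝ), ∀ y : EuclideanSpace ℝ (Fin d),
          ‖y - p.1‖ < δ → |ψ (y, p.2) - ψ p - A (y - p.1)| ≤ ε * ‖y - p.1‖) :
    ∀ᵐ p : EuclideanSpace ℝ (Fin d) × ℝ ∂volume,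
      ∃ A : EuclideanSpace ℝ (Fin d) →ₗ[ℝ] ℝ,
        (∀ ε > (0 : ℝ), ∃ δ > (0 : ℝ), ∀ y : EuclideanSpace ℝ (Fin d),
          ‖y - p.1‖ < δ → |ψ (y, p.2) - ψ p - A (y - p.1)| ≤ ε * ‖y - p.1‖) ∧
        (∀ ε > (0 : ℝ), ∃ δ > (0 : ℝ), ∀ q : EuclideanSpace ℝ (Fin d) × ℝ,
          pdist p q < δ → |ψ q - ψ p - A (q.1 - p.1)| ≤ ε * pdist p q) := by
  filter_upwards [h1, h2] with p hβ ⟨A, hA⟩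
  exact ⟨A, hA, Parabolic.HasHorizontalDerivAt.hasParabolicDerivAt hA hψ hβ⟩
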